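/- For all integers n ≥ 1 and k ≥ 1, the number of Catalan words of length n with exactly k runs of weak descents equals the number of Catalan words of length n with exactly k runs of ascents. -/

import Mathlib

/-!
Split a Catalan word at its last zero, `w = u 0 (s+1)`, and put `φ w = φ(s) 0 (φ(u)+1)`.
By induction along this decomposition, `φ` is a length-preserving involution of Catalan words
and the number of weak descents of `φ w` equals the number of ascents of `w`: the letter `0`
contributes no ascent `(x, 0)` to `w` and no weak descent `(0, x+1)` to `φ w`, while the
ascent `(0, s₁+1)` of `w` (present iff `s ≠ []`) matches the weak descent of `φ w` formed by
the last letter of `φ(s)` and `0`.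
As `runs = 1 + #weak descents` and `w̄runs = 1 + #ascents`, `φ` exchanges the two statistics.
-/

/-- The set of Catalan words of length `n`: words `w` over ℕ with `w 1 = 0` and
`w (i+1) ≤ w i + 1` for all `i`. -/
def CatalanWord (n : ℕ) : Set (List ℕ) :=
  {w | w.length = n ∧ w.getD 0 0 = 0 ∧
    ∀ i, i + 1 < n → w.getD (i + 1) 0 ≤ w.getD i 0 + 1}

/-- Number of runs of ascents of `w`: `1 + #{i : w i ≥ w (i+1)}`. -/
def ascRuns (w : List ℕ) : ℕ :=
  1 + ((Finset.range (w.length - 1)).filter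
    (fun i => w.getD (i + 1) 0 ≤ w.getD i 0)).card

/-- Number of runs of weak descents of `w`: `1 + #{i : w i < w (i+1)}`. -/
def wDescRuns (w : List ℕ) : ℕ :=
  1 + ((Finset.range (w.length - 1)).filter
    (fun i => w.getD i 0 < w.getD (i + 1) 0)).card

def adjCount {α : Type*} (r : α → α → Prop) [DecidableRel r] : List α → ℕ
  | a :: b :: l => (if r a b then 1 else 0) + adjCount r (b :: l)
  | _ => 0

section adjCount

variable {α β : Type*} {r : α → α → Prop} [DecidableRel r]

theorem adjCount_map {s : β → β → Prop} [DecidableRel s] (f : β → α)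
    (hf : ∀ a b, r (f a) (f b) ↔ s a b) : ∀ l : List β, adjCount r (l.map f) = adjCount s l
  | [] | [_] => rfl
  | a :: b :: l => by
    rw [List.map_cons, List.map_cons, adjCount, ← List.map_cons, adjCount_map f hf (b :: l),
      adjCount, if_congr (hf a b) rfl rfl]

theorem adjCount_append_cons_of_forall_not_rel {a : α} (ha : ∀ x, ¬ r x a) (t : List α) :
    ∀ u : List α, adjCount r (u ++ a :: t) = adjCount r u + adjCount r (a :: t)
  | [] => by simp [adjCount]
  | [x] => by simp [adjCount, ha]
  | x :: y :: u => by
    simp only [List.cons_append, adjCount]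
    rw [← List.cons_append, adjCount_append_cons_of_forall_not_rel ha t (y :: u)]
    ring

theorem adjCount_append_cons_of_forall_rel {a : α} (ha : ∀ x, r x a) (t : List α) :
    ∀ u : List α, adjCount r (u ++ a :: t) =
      adjCount r u + (if u = [] then 0 else 1) + adjCount r (a :: t)
  | [] => by simp [adjCount]
  | [x] => by simp [adjCount, ha]
  | x :: y :: u => by
    simp only [List.cons_append, adjCount]
    rw [← List.cons_append, adjCount_append_cons_of_forall_rel ha t (y :: u)]
    simp only [reduceCtorEq, if_false]
    ring

end adjCount

theorem card_filter_range_eq_adjCount {α : Type*} (r : α → α → Prop) [DecidableRel r]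
    (d : α) :
    ∀ w : List α,
      ((Finset.range (w.length - 1)).filter fun i => r (w.getD i d) (w.getD (i + 1) d)).card =
        adjCount r w
  | [] | [_] => by simp [adjCount]
  | a :: b :: l => by
    have ih := card_filter_range_eq_adjCount r d (b :: l)
    rw [Finset.card_filter] at ih ⊢
    rw [List.length_cons, Nat.add_sub_cancel, List.length_cons, Finset.sum_range_succ', adjCount,
      ← ih]
    simp only [List.getD_cons_succ, List.getD_cons_zero, List.length_cons, Nat.add_sub_cancel]
    ring

theorem adjCount_lt_zero_cons_map_succ : ∀ l : List ℕ,
    adjCount (· < ·) (0 :: l.map (· + 1)) = adjCount (· < ·) l + if l = [] then 0 else 1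
  | [] => rfl
  | a :: l => by
    have := adjCount_map (r := (· < ·)) (· + 1) (fun _ _ => Nat.add_lt_add_iff_right) (a :: l)
    simp only [List.map_cons] at this
    simp [adjCount, this, add_comm]

theorem adjCount_ge_zero_cons_map_succ : ∀ l : List ℕ,
    adjCount (· ≥ ·) (0 :: l.map (· + 1)) = adjCount (· ≥ ·) l
  | [] => rfl
  | a :: l => by
    have := adjCount_map (r := (· ≥ ·)) (· + 1) (fun _ _ => Nat.add_le_add_iff_right) (a :: l)
    simp only [List.map_cons] at this
    simp [adjCount, this]

theorem ascRuns_eq_one_add_adjCount (w : List ℕ) : ascRuns w = 1 + adjCount (· ≥ ·) w := by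
  rw [ascRuns, ← card_filter_range_eq_adjCount _ 0]

theorem wDescRuns_eq_one_add_adjCount (w : List ℕ) : wDescRuns w = 1 + adjCount (· < ·) w := by
  rw [wDescRuns, ← card_filter_range_eq_adjCount _ 0]

def IsCatalan (w : List ℕ) : Prop :=
  (∀ a ∈ w.head?, a = 0) ∧ w.IsChain (fun a b => b ≤ a + 1)

theorem exists_eq_append_zero_cons_map_succ {w : List ℕ} (h : 0 ∈ w) :
    ∃ u s : List ℕ, w = u ++ 0 :: s.map (· + 1) := by
  induction w with
  | nil => simp at h
  | cons a l ih =>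
    by_cases hl : 0 ∈ l
    · obtain ⟨u, s, rfl⟩ := ih hl
      exact ⟨a :: u, s, rfl⟩
    · obtain rfl : a = 0 := by simp_all [eq_comm]
      refine ⟨[], l.map (· - 1), ?_⟩
      rw [List.map_map, List.nil_append, List.cons.injEq, List.map_congr_left, List.map_id]
      · exact ⟨rfl, rfl⟩
      · intro x hx
        exact Nat.sub_add_cancel (Nat.pos_of_ne_zero fun h => hl (h ▸ hx))

theorem isCatalan_append_zero_cons_map_succ_iff {u s : List ℕ} :
    IsCatalan (u ++ 0 :: s.map (· + 1)) ↔ IsCatalan u ∧ IsCatalan s := by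
  simp only [IsCatalan, List.isChain_append, List.isChain_cons, List.isChain_map]
  cases u <;> cases s <;> simp
  tauto

theorem IsCatalan.zero_mem {w : List ℕ} (hw : IsCatalan w) (hne : w ≠ []) : 0 ∈ w := by
  obtain ⟨a, l, rfl⟩ := List.exists_cons_of_ne_nil hne
  simp [hw.1 a rfl]

theorem IsCatalan.induction {motive : (w : List ℕ) → IsCatalan w → Prop}
    (nil : motive [] ⟨by simp, .nil⟩)
    (append_zero_cons : ∀ u s (hu : IsCatalan u) (hs : IsCatalan s),
      motive u hu → motive s hs →
        motive (u ++ 0 :: s.map (· + 1)) (isCatalan_append_zero_cons_map_succ_iff.2 ⟨hu, hs⟩))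
    {w : List ℕ} (hw : IsCatalan w) : motive w hw := by
  induction hlen : w.length using Nat.strong_induction_on generalizing w with
  | _ n ih =>
    rcases eq_or_ne w [] with rfl | hne
    · exact nil
    obtain ⟨u, s, rfl⟩ := exists_eq_append_zero_cons_map_succ (hw.zero_mem hne)
    obtain ⟨hu, hs⟩ := isCatalan_append_zero_cons_map_succ_iff.mp hw
    have hlen' : u.length + s.length + 1 = n := by simp at hlen; omega
    exact append_zero_cons u s hu hs (ih _ (by omega) hu rfl) (ih _ (by omega) hs rfl)

theorem mem_catalanWord_iff {n : ℕ} {w : List ℕ} :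
    w ∈ CatalanWord n ↔ w.length = n ∧ IsCatalan w := by
  refine and_congr_right fun hn => and_congr ?_ ?_
  · cases w <;> simp
  · subst hn
    rw [List.isChain_iff_getElem]
    refine forall_congr' fun i => forall_congr' fun hi => ?_
    simp [hi, Nat.lt_of_succ_lt hi]

/-- Reading `w` backwards up to its last zero writes `w = u ++ 0 :: t` with `0 ∉ t`; the image
is `φ (t - 1) ++ 0 :: (φ u + 1)`. Words without a zero (only `[]` among Catalan words) go
to `[]`. -/
def catalanInvolution (w : List ℕ) : List ℕ :=
  if h : 0 ∈ w then
    catalanInvolution ((w.reverse.takeWhile (· ≠ 0)).reverse.map (· - 1)) ++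
      0 :: (catalanInvolution (w.reverse.dropWhile (· ≠ 0)).tail.reverse).map (· + 1)
  else []
termination_by w.length
decreasing_by
  all_goals
    have hsplit := congrArg List.length (w.reverse.takeWhile_append_dropWhile (p := (· ≠ 0)))
    have hne : w.reverse.dropWhile (· ≠ 0) ≠ [] := fun hnil => by
      simpa using List.dropWhile_eq_nil_iff.mp hnil 0 (List.mem_reverse.mpr h)
    have := List.length_pos_iff.mpr hne
    simp only [List.length_append, List.length_reverse] at hsplit
    simp only [List.length_map, List.length_reverse, List.length_tail, List.unattach_reverse,
      List.unattach_attach]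
    omega

theorem catalanInvolution_nil : catalanInvolution [] = [] := by
  rw [catalanInvolution]; simp

theorem catalanInvolution_append_zero_cons_map_succ (u s : List ℕ) :
    catalanInvolution (u ++ 0 :: s.map (· + 1)) =
      catalanInvolution s ++ 0 :: (catalanInvolution u).map (· + 1) := by
  have hpos : ∀ a ∈ (s.map (· + 1)).reverse, decide (a ≠ 0) = true := by simp
  have hrev : (u ++ 0 :: s.map (· + 1)).reverse = (s.map (· + 1)).reverse ++ 0 :: u.reverse := by
    simp
  rw [catalanInvolution, dif_pos (by simp), hrev, List.takeWhile_append_of_pos hpos,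
    List.dropWhile_append_of_pos hpos]
  simp [List.map_map, Function.comp_def]

namespace IsCatalan

variable {w : List ℕ}

theorem length_catalanInvolution (hw : IsCatalan w) :
    (catalanInvolution w).length = w.length := by
  induction hw using IsCatalan.induction with
  | nil => rw [catalanInvolution_nil]
  | append_zero_cons u s _ _ ihu ihs =>
    simp [catalanInvolution_append_zero_cons_map_succ, ihu, ihs]; omega

theorem isCatalan_catalanInvolution (hw : IsCatalan w) : IsCatalan (catalanInvolution w) := by
  induction hw using IsCatalan.induction with
  | nil => rw [catalanInvolution_nil]; exact ⟨by simp, .nil⟩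
  | append_zero_cons u s _ _ ihu ihs =>
    rw [catalanInvolution_append_zero_cons_map_succ]
    exact isCatalan_append_zero_cons_map_succ_iff.mpr ⟨ihs, ihu⟩

theorem catalanInvolution_catalanInvolution (hw : IsCatalan w) :
    catalanInvolution (catalanInvolution w) = w := by
  induction hw using IsCatalan.induction with
  | nil => rw [catalanInvolution_nil, catalanInvolution_nil]
  | append_zero_cons u s _ _ ihu ihs =>
    rw [catalanInvolution_append_zero_cons_map_succ, catalanInvolution_append_zero_cons_map_succ,
      ihu, ihs]

theorem adjCount_ge_catalanInvolution (hw : IsCatalan w) :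
    adjCount (· ≥ ·) (catalanInvolution w) = adjCount (· < ·) w := by
  induction hw using IsCatalan.induction with
  | nil => rw [catalanInvolution_nil]; rfl
  | append_zero_cons u s _ hs ihu ihs =>
    have hnil : catalanInvolution s = [] ↔ s = [] := by
      rw [← List.length_eq_zero_iff, hs.length_catalanInvolution, List.length_eq_zero_iff]
    rw [catalanInvolution_append_zero_cons_map_succ,
      adjCount_append_cons_of_forall_rel Nat.zero_le, adjCount_ge_zero_cons_map_succ,
      adjCount_append_cons_of_forall_not_rel Nat.not_lt_zero, adjCount_lt_zero_cons_map_succ,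
      ihu, ihs]
    simp only [hnil]
    ring

theorem ascRuns_catalanInvolution (hw : IsCatalan w) :
    ascRuns (catalanInvolution w) = wDescRuns w := by
  rw [ascRuns_eq_one_add_adjCount, wDescRuns_eq_one_add_adjCount, hw.adjCount_ge_catalanInvolution]

theorem wDescRuns_catalanInvolution (hw : IsCatalan w) :
    wDescRuns (catalanInvolution w) = ascRuns w := by
  conv_rhs => rw [← hw.catalanInvolution_catalanInvolution]
  exact hw.isCatalan_catalanInvolution.ascRuns_catalanInvolution.symm

end IsCatalan

theorem catalanInvolution_mem_catalanWord {n : ℕ} {w : List ℕ} (hw : w ∈ CatalanWord n) :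
    catalanInvolution w ∈ CatalanWord n := by
  obtain ⟨rfl, hcat⟩ := mem_catalanWord_iff.mp hw
  exact mem_catalanWord_iff.mpr
    ⟨hcat.length_catalanInvolution, hcat.isCatalan_catalanInvolution⟩

theorem wDescRuns_count_eq_ascRuns_count_general (n k : ℕ) :
    Nat.card {w : List ℕ | w ∈ CatalanWord n ∧ wDescRuns w = k} =
      Nat.card {w : List ℕ | w ∈ CatalanWord n ∧ ascRuns w = k} := by
  have hinv {w} (hw : w ∈ CatalanWord n) : catalanInvolution (catalanInvolution w) = w :=
    (mem_catalanWord_iff.mp hw).2.catalanInvolution_catalanInvolution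
  refine Nat.card_congr (Set.BijOn.equiv catalanInvolution
    (Set.InvOn.bijOn ⟨fun w hw => hinv hw.1, fun w hw => hinv hw.1⟩ ?_ ?_))
  · rintro w ⟨hw, rfl⟩
    exact ⟨catalanInvolution_mem_catalanWord hw,
      (mem_catalanWord_iff.mp hw).2.ascRuns_catalanInvolution⟩
  · rintro w ⟨hw, rfl⟩
    exact ⟨catalanInvolution_mem_catalanWord hw,
      (mem_catalanWord_iff.mp hw).2.wDescRuns_catalanInvolution⟩

/-- The number of Catalan words of length `n` with exactly `k` runs of weak descents
equals the number of Catalan words of length `n` with exactly `k` runs of ascents. -/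
theorem wDescRuns_count_eq_ascRuns_count (n k : ℕ) (hn : 1 ≤ n) (hk : 1 ≤ k) :
    Nat.card {w : List ℕ | w ∈ CatalanWord n ∧ wDescRuns w = k} =
      Nat.card {w : List ℕ | w ∈ CatalanWord n ∧ ascRuns w = k} :=
  wDescRuns_count_eq_ascRuns_count_general n k
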